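/- Let G : [0,1] → [0,∞) be continuous, increasing, positive on (0,1] with G(0) = 0, satisfying (ExpDec): liminf_{x→0⁺} x·log(1/G(x)) > 0, and (LogLogInt): ∫₀^d log log(1/G(x)) dx < ∞ for some d > 0. Then the sequence M_n = 2·∫₀¹ G(1−r)·r^{2n+1} dr, n ≥ 0, is an admissible sequence. -/

import Mathlib

open MeasureTheory Set Filter
open scoped Real ENNReal Topology

noncomputable section

/-- An admissible sequence: positive, decreasing to 0, eventually logarithmically
convex, decaying at least like exp(-d√n), and with ∑ log(1/Mₙ)/(1+n²) < ∞. -/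
def AdmissibleSeq (M : ℕ → ℝ) : Prop :=
  (∀ n, 0 < M n) ∧
  (∀ m n : ℕ, m ≤ n → M n ≤ M m) ∧
  Tendsto M atTop (𝓝 0) ∧
  (∃ N : ℕ, ∀ n ≥ N,
    2 * Real.log (M (n + 1)) ≤ Real.log (M (n + 2)) + Real.log (M n)) ∧
  (∃ d > (0:ℝ), ∃ N : ℕ, ∀ n ≥ N, M n ≤ Real.exp (-d * Real.sqrt n)) ∧
  Summable (fun n : ℕ => Real.log (1 / M n) / (1 + (n : ℝ) ^ 2))

/-!
Write `h = log (1 / G)`. (ExpDec) gives `G x ≤ B exp (-c / x)` on `(0, 1]`; together with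
`r ^ k ≤ exp (-k (1 - r))` and AM-GM this bounds `∫ G (1 - r) r ^ k dr` by
`B exp (-2 √(c k))`. Log-convexity is the Cauchy-Schwarz inequality for the measure
`G (1 - r) r ^ k dr`.
For the summability, restricting the integral to `(1 - 2y, 1 - y]` gives
`log (1 / Mₙ) ≤ log (1 / y) + h y + O(n y)`. Since `{h > √n}` is an initial segment of
`(0, δ]`, any `y` beyond its measure `aₙ` has `h y ≤ √n`, so `log (1 / Mₙ) ≲ √n + n aₙ`;
finally `∑ aₙ / n ≤ ∫ (1 + 2 log h) < ∞` because `∑_{1 ≤ n ≤ h²} 1 / n ≤ 1 + 2 log h`.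
-/

open Real

/-- In `ℝ` a `liminf` of a function unbounded below is the junk value `0`, hence `0 ≤ b`. -/
lemma eventually_lt_of_nonneg_of_lt_liminf {α : Type*} {f : Filter α} {u : α → ℝ} {b : ℝ}
    (hb : 0 ≤ b) (h : b < liminf u f) : ∀ᶠ x in f, b < u x := by
  by_cases hu : IsBoundedUnder (· ≥ ·) f u
  · exact eventually_lt_of_lt_liminf h hu
  · rw [Real.liminf_of_not_isBoundedUnder hu] at h
    exact absurd h hb.not_gt

lemma tendsto_sqrt_natCast_atTop : Tendsto (fun n : ℕ => √(n : ℝ)) atTop atTop :=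
  tendsto_sqrt_atTop.comp tendsto_natCast_atTop_atTop

lemma tendsto_exp_neg_mul_sqrt_natCast {b : ℝ} (hb : 0 < b) :
    Tendsto (fun n : ℕ => exp (-b * √n)) atTop (𝓝 0) :=
  tendsto_exp_atBot.comp <|
    Tendsto.const_mul_atTop_of_neg (neg_neg_of_pos hb) tendsto_sqrt_natCast_atTop

lemma two_mul_sqrt_mul_le_add {a b : ℝ} (ha : 0 ≤ a) (hb : 0 ≤ b) :
    2 * √(a * b) ≤ a + b := by
  rw [Real.sqrt_mul ha]
  nlinarith [sq_nonneg (√a - √b), Real.sq_sqrt ha, Real.sq_sqrt hb]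

lemma exp_neg_div_mul_one_sub_pow_le {c u : ℝ} (hc : 0 ≤ c) (hu : 0 < u) (hu1 : u ≤ 1)
    (k : ℕ) :
    exp (-(c / u)) * (1 - u) ^ k ≤ exp (-(2 * √(c * k))) := by
  have hpow : (1 - u) ^ k ≤ exp (k * -u) := by
    rw [exp_nat_mul]
    exact pow_le_pow_left₀ (by linarith) (one_sub_le_exp_neg u) k
  have hamgm := two_mul_sqrt_mul_le_add (div_nonneg hc hu.le) (mul_nonneg k.cast_nonneg hu.le)
  rw [show c / u * (k * u) = c * k by field_simp] at hamgm
  calc exp (-(c / u)) * (1 - u) ^ k ≤ exp (-(c / u)) * exp (k * -u) := by gcongr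
    _ = exp (-(c / u + k * u)) := by rw [← exp_add]; ring_nf
    _ ≤ exp (-(2 * √(c * k))) := by gcongr

lemma two_mul_log_le_log_add_log {a b c : ℝ} (ha : 0 < a) (hb : 0 < b) (hc : 0 < c)
    (h : b ^ 2 ≤ a * c) : 2 * log b ≤ log a + log c := by
  have := log_le_log (by positivity) h
  rwa [log_pow, log_mul ha.ne' hc.ne', Nat.cast_ofNat] at this

lemma sq_integral_mul_le_integral_mul_integral_mul_sq {α : Type*} [MeasurableSpace α]
    {μ : Measure α} {f g : α → ℝ} (hf0 : 0 ≤ᵐ[μ] f) (hf : Integrable f μ)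
    (hfg : Integrable (fun x => f x * g x) μ) (hfg2 : Integrable (fun x => f x * g x ^ 2) μ) :
    (∫ x, f x * g x ∂μ) ^ 2 ≤ (∫ x, f x ∂μ) * ∫ x, f x * g x ^ 2 ∂μ := by
  have hquad : ∀ t : ℝ, 0 ≤ (∫ x, f x ∂μ) * (t * t) + 2 * (∫ x, f x * g x ∂μ) * t
      + ∫ x, f x * g x ^ 2 ∂μ := by
    intro t
    have hexp : (fun x => f x * (t + g x) ^ 2)
        = fun x => f x * (t * t) + f x * g x * (2 * t) + f x * g x ^ 2 := by
      ext x; ring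
    have hint : ∫ x, f x * (t + g x) ^ 2 ∂μ = (∫ x, f x ∂μ) * (t * t)
        + 2 * (∫ x, f x * g x ∂μ) * t + ∫ x, f x * g x ^ 2 ∂μ := by
      rw [hexp, integral_add ?_ hfg2, integral_add (hf.mul_const _) (hfg.mul_const _),
        integral_mul_const, integral_mul_const]
      · ring
      · exact (hf.mul_const _).add (hfg.mul_const _)
    rw [← hint]
    exact integral_nonneg_of_ae (hf0.mono fun x hx => mul_nonneg hx (sq_nonneg _))
  have := discrim_le_zero hquad
  rw [discrim] at this
  nlinarith

lemma tsum_ite_sqrt_lt_le (z : ℝ) :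
    ∑' n : ℕ, (if √n < z then ENNReal.ofReal (1 / n) else 0)
      ≤ 1 + 2 * ENNReal.ofReal (log z) := by
  set K := ⌊z ^ 2⌋₊
  have hsupp : ∀ n ∉ Finset.Icc 1 K, (if √n < z then ENNReal.ofReal (1 / n) else 0) = 0 := by
    intro n hn
    rw [Finset.mem_Icc, not_and_or, not_le, not_le, Nat.lt_one_iff] at hn
    split_ifs with hz
    · rcases hn with rfl | hn
      · simp
      · exact absurd (Nat.le_floor (Real.lt_sq_of_sqrt_lt hz).le) hn.not_ge
    · rfl
  rw [tsum_eq_sum hsupp]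
  calc ∑ n ∈ Finset.Icc 1 K, (if √n < z then ENNReal.ofReal (1 / n) else 0)
      ≤ ∑ n ∈ Finset.Icc 1 K, ENNReal.ofReal (1 / n) :=
        Finset.sum_le_sum fun n _ => by split_ifs <;> simp
    _ = ENNReal.ofReal (harmonic K) := by
        rw [← ENNReal.ofReal_sum_of_nonneg fun n _ => by positivity, harmonic_eq_sum_Icc]
        push_cast
        simp only [one_div]
    _ ≤ ENNReal.ofReal (1 + 2 * log z) := by
        rcases Nat.eq_zero_or_pos K with hK | hK
        · simp [hK]
        refine ENNReal.ofReal_le_ofReal ((harmonic_le_one_add_log K).trans ?_)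
        have hKz : (K : ℝ) ≤ z ^ 2 := Nat.floor_le (sq_nonneg z)
        have := log_le_log (by exact_mod_cast hK) hKz
        rw [log_pow, Nat.cast_ofNat] at this
        linarith
    _ ≤ 1 + 2 * ENNReal.ofReal (log z) := by
        refine ENNReal.ofReal_add_le.trans ?_
        rw [ENNReal.ofReal_one, ENNReal.ofReal_mul zero_le_two, ENNReal.ofReal_ofNat]

lemma summable_measureReal_sqrt_lt_div {α : Type*} [MeasurableSpace α] {μ : Measure α}
    [IsFiniteMeasure μ] {h : α → ℝ} (hh : AEMeasurable h μ)
    (hlog : ∫⁻ x, ENNReal.ofReal (log (h x)) ∂μ ≠ ∞) :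
    Summable fun n : ℕ => μ.real {x | √n < h x} / n := by
  have hmeas : ∀ n : ℕ, NullMeasurableSet {x | √n < h x} μ :=
    fun n => nullMeasurableSet_lt aemeasurable_const hh
  have hbound : ∑' n : ℕ, μ {x | √n < h x} * ENNReal.ofReal (1 / n)
      ≤ μ univ + 2 * ∫⁻ x, ENNReal.ofReal (log (h x)) ∂μ := by
    calc ∑' n : ℕ, μ {x | √n < h x} * ENNReal.ofReal (1 / n)
        = ∫⁻ x, ∑' n : ℕ,
            {x | √n < h x}.indicator (fun _ => ENNReal.ofReal (1 / n)) x ∂μ := by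
          rw [lintegral_tsum fun n => aemeasurable_const.indicator₀ (hmeas n)]
          simp only [lintegral_indicator_const₀ (hmeas _), mul_comm]
      _ ≤ ∫⁻ x, (1 + 2 * ENNReal.ofReal (log (h x))) ∂μ :=
          lintegral_mono fun x => by
            simpa only [indicator_apply, mem_ofPred_eq] using tsum_ite_sqrt_lt_le (h x)
      _ = μ univ + 2 * ∫⁻ x, ENNReal.ofReal (log (h x)) ∂μ := by
          rw [lintegral_add_left measurable_const, lintegral_const, one_mul,
            lintegral_const_mul' _ _ ENNReal.ofNat_ne_top]
  have hfin := ne_top_of_le_ne_top (ENNReal.add_ne_top.2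
    ⟨measure_ne_top _ _, ENNReal.mul_ne_top ENNReal.ofNat_ne_top hlog⟩) hbound
  refine (ENNReal.summable_toReal hfin).congr fun n => ?_
  rw [ENNReal.toReal_mul, ENNReal.toReal_ofReal (by positivity), mul_one_div]
  rfl

lemma exists_mem_Ioc_le_of_antitoneOn {h : ℝ → ℝ} {δ s t : ℝ}
    (hanti : AntitoneOn h (Ioc 0 δ)) (hs : 0 < s) (hsδ : s ≤ δ) (hδ : h δ ≤ t) :
    ∃ y ∈ Ioc 0 δ, s ≤ y ∧ y ≤ (volume.restrict (Ioc 0 δ)).real {x | t < h x} + s ∧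
      h y ≤ t := by
  set a := (volume.restrict (Ioc 0 δ)).real {x | t < h x}
  have ha : 0 ≤ a := measureReal_nonneg
  set y := min (a + s) δ
  have hy : y ∈ Ioc 0 δ := ⟨lt_min (by linarith) (hs.trans_le hsδ), min_le_right _ _⟩
  refine ⟨y, hy, le_min (by linarith) hsδ, min_le_left _ _, ?_⟩
  by_contra! hlt
  have hsub : Ioc 0 y ⊆ {x | t < h x} :=
    fun x hx => hlt.trans_le (hanti ⟨hx.1, hx.2.trans hy.2⟩ hy hx.2)
  have hya : y ≤ a := by
    calc y = (volume.restrict (Ioc 0 δ)).real (Ioc 0 y) := by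
          rw [measureReal_restrict_apply measurableSet_Ioc,
            inter_eq_left.2 (Ioc_subset_Ioc_right hy.2), Real.volume_real_Ioc_of_le hy.1.le,
            sub_zero]
      _ ≤ a := measureReal_mono hsub
  have hyδ : y = δ := (min_choice _ _).resolve_left (by linarith)
  rw [hyδ] at hlt
  linarith

lemma summable_sqrt_div_one_add_sq : Summable fun n : ℕ => √n / (1 + (n : ℝ) ^ 2) := by
  refine (Real.summable_nat_rpow.2 (show -(3 / 2) < (-1 : ℝ) by norm_num)).of_nonneg_of_le
    (fun n => by positivity) fun n => ?_
  rcases Nat.eq_zero_or_pos n with rfl | hn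
  · simp
  have hn' : (0 : ℝ) < n := by exact_mod_cast hn
  rw [Real.rpow_neg hn'.le, show (3 / 2 : ℝ) = 2 - 1 / 2 by norm_num, Real.rpow_sub hn',
    Real.rpow_two, ← Real.sqrt_eq_rpow, inv_div]
  exact div_le_div_of_nonneg_left (sqrt_nonneg _) (by positivity) (by linarith)

lemma summable_log_one_div_div_one_add_sq {M a : ℕ → ℝ} {C D : ℝ} (hpos : ∀ n, 0 < M n)
    (hM : Tendsto M atTop (𝓝 0)) (ha0 : ∀ n, 0 ≤ a n) (ha : Summable fun n : ℕ => a n / n)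
    (hle : ∀ᶠ n : ℕ in atTop, log (1 / M n) ≤ C * √n + D * (n * a n)) :
    Summable fun n : ℕ => log (1 / M n) / (1 + (n : ℝ) ^ 2) := by
  have hna : Summable fun n : ℕ => n * a n / (1 + (n : ℝ) ^ 2) := by
    refine ha.of_nonneg_of_le (fun n => by have := ha0 n; positivity) fun n => ?_
    rcases Nat.eq_zero_or_pos n with rfl | hn
    · simp
    have hn' : (0 : ℝ) < n := by exact_mod_cast hn
    rw [div_le_div_iff₀ (by positivity) hn']
    nlinarith [ha0 n]
  refine ((summable_sqrt_div_one_add_sq.mul_left C).add (hna.mul_left D)).of_norm_bounded_eventually_nat ?_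
  filter_upwards [hle, hM.eventually_le_const one_pos] with n hlog hM1
  rw [Real.norm_of_nonneg (div_nonneg (log_nonneg (one_le_one_div (hpos n) hM1)) (by positivity))]
  calc log (1 / M n) / (1 + (n : ℝ) ^ 2)
      ≤ (C * √n + D * (n * a n)) / (1 + (n : ℝ) ^ 2) := by gcongr
    _ = _ := by ring

lemma exists_eventually_le_exp_neg_mul_sqrt {M : ℕ → ℝ} {A b : ℝ} (hb : 0 < b)
    (hM : ∀ n : ℕ, M n ≤ A * exp (-b * √n)) :
    ∃ d > (0 : ℝ), ∃ N : ℕ, ∀ n ≥ N, M n ≤ exp (-d * √n) := by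
  obtain ⟨N, hN⟩ := eventually_atTop.1
    (((tendsto_exp_neg_mul_sqrt_natCast (half_pos hb)).const_mul A).eventually_le_const
      (show A * 0 < 1 by simp))
  refine ⟨b / 2, half_pos hb, N, fun n hn => ?_⟩
  calc M n ≤ A * exp (-b * √n) := hM n
    _ = A * exp (-(b / 2) * √n) * exp (-(b / 2) * √n) := by rw [mul_assoc, ← exp_add]; ring_nf
    _ ≤ exp (-(b / 2) * √n) := mul_le_of_le_one_left (exp_pos _).le (hN n hn)

def weightedMoment (G : ℝ → ℝ) (k : ℕ) : ℝ := ∫ r in Ioo 0 1, G (1 - r) * r ^ k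

section weightedMoment

variable {G : ℝ → ℝ}

lemma exists_le_mul_exp_neg_div (hGmono : MonotoneOn G (Icc 0 1))
    (hGpos : ∀ x ∈ Ioc (0 : ℝ) 1, 0 < G x)
    (hExpDec : 0 < liminf (fun x : ℝ => x * log (1 / G x)) (𝓝[>] (0 : ℝ))) :
    ∃ B c : ℝ, 0 ≤ B ∧ 0 < c ∧ ∀ x ∈ Ioc (0 : ℝ) 1, G x ≤ B * exp (-(c / x)) := by
  set c := liminf (fun x : ℝ => x * log (1 / G x)) (𝓝[>] (0 : ℝ)) / 2
  have hc : 0 < c := half_pos hExpDec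
  obtain ⟨δ, hδ, hsub⟩ := mem_nhdsGT_iff_exists_Ioo_subset.1
    (eventually_lt_of_nonneg_of_lt_liminf hc.le (half_lt_self hExpDec))
  have hG1 := hGpos 1 ⟨one_pos, le_rfl⟩
  refine ⟨max 1 (G 1 * exp (c / δ)), c, by positivity, hc, fun x hx => ?_⟩
  rcases lt_or_ge x δ with hxδ | hxδ
  · have hcx : c < x * log (1 / G x) := hsub ⟨hx.1, hxδ⟩
    have hlog : log (G x) < -(c / x) := by
      rw [one_div, log_inv] at hcx
      rw [lt_neg, div_lt_iff₀ hx.1]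
      linarith
    calc G x = exp (log (G x)) := (exp_log (hGpos x hx)).symm
      _ ≤ exp (-(c / x)) := exp_le_exp.2 hlog.le
      _ ≤ max 1 (G 1 * exp (c / δ)) * exp (-(c / x)) :=
          le_mul_of_one_le_left (exp_pos _).le (le_max_left _ _)
  · calc G x ≤ G 1 := hGmono ⟨hx.1.le, hx.2⟩ ⟨zero_le_one, le_rfl⟩ hx.2
      _ = G 1 * exp (c / δ) * exp (-(c / δ)) := by
          rw [mul_assoc, ← exp_add, add_neg_cancel, exp_zero, mul_one]
      _ ≤ max 1 (G 1 * exp (c / δ)) * exp (-(c / x)) := by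
          gcongr
          exact le_max_right _ _

lemma one_sub_mem_Ioc {r : ℝ} (hr : r ∈ Ioo (0 : ℝ) 1) : 1 - r ∈ Ioc (0 : ℝ) 1 :=
  ⟨sub_pos.2 hr.2, sub_le_self 1 hr.1.le⟩

lemma integrableOn_weightedMoment (hG : ContinuousOn G (Icc 0 1)) (k : ℕ) :
    IntegrableOn (fun r => G (1 - r) * r ^ k) (Ioo 0 1) := by
  have : ContinuousOn (fun r : ℝ => G (1 - r) * r ^ k) (Icc 0 1) :=
    (hG.comp (by fun_prop) fun r hr => ⟨sub_nonneg.2 hr.2, sub_le_self 1 hr.1⟩).mul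
      (by fun_prop)
  exact this.integrableOn_Icc.mono_set Ioo_subset_Icc_self

lemma weightedMoment_integrand_nonneg (hGpos : ∀ x ∈ Ioc (0 : ℝ) 1, 0 < G x) {r : ℝ}
    (hr : r ∈ Ioo (0 : ℝ) 1) (k : ℕ) : 0 ≤ G (1 - r) * r ^ k :=
  mul_nonneg (hGpos _ (one_sub_mem_Ioc hr)).le (pow_nonneg hr.1.le k)

lemma weightedMoment_antitone (hGcont : ContinuousOn G (Icc 0 1))
    (hGpos : ∀ x ∈ Ioc (0 : ℝ) 1, 0 < G x) : Antitone (weightedMoment G) := fun k l hkl =>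
  setIntegral_mono_on (integrableOn_weightedMoment hGcont l) (integrableOn_weightedMoment hGcont k)
    measurableSet_Ioo fun _ hr => mul_le_mul_of_nonneg_left
      (pow_le_pow_of_le_one hr.1.le hr.2.le hkl) (hGpos _ (one_sub_mem_Ioc hr)).le

lemma sq_weightedMoment_add_le (hGcont : ContinuousOn G (Icc 0 1))
    (hGpos : ∀ x ∈ Ioc (0 : ℝ) 1, 0 < G x) (k j : ℕ) :
    weightedMoment G (k + j) ^ 2 ≤ weightedMoment G k * weightedMoment G (k + 2 * j) := by
  have e1 : ∀ r : ℝ, G (1 - r) * r ^ (k + j) = G (1 - r) * r ^ k * r ^ j := fun r => by ring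
  have e2 : ∀ r : ℝ, G (1 - r) * r ^ (k + 2 * j) = G (1 - r) * r ^ k * (r ^ j) ^ 2 :=
    fun r => by ring
  have hInt := integrableOn_weightedMoment hGcont
  unfold weightedMoment
  simp only [e1, e2] at hInt ⊢
  exact sq_integral_mul_le_integral_mul_integral_mul_sq
    (ae_restrict_of_forall_mem measurableSet_Ioo fun _ hr =>
      weightedMoment_integrand_nonneg hGpos hr k)
    (hInt k) (by simpa only [e1, IntegrableOn] using hInt (k + j))
    (by simpa only [e2, IntegrableOn] using hInt (k + 2 * j))

lemma weightedMoment_le (hGcont : ContinuousOn G (Icc 0 1)) {B c : ℝ} (hB : 0 ≤ B)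
    (hc : 0 ≤ c) (hGB : ∀ x ∈ Ioc (0 : ℝ) 1, G x ≤ B * exp (-(c / x))) (k : ℕ) :
    weightedMoment G k ≤ B * exp (-(2 * √c) * √k) := by
  have hpt : ∀ r ∈ Ioo (0 : ℝ) 1, G (1 - r) * r ^ k ≤ B * exp (-(2 * √c) * √k) := by
    intro r hr
    have hu := one_sub_mem_Ioc hr
    have h := exp_neg_div_mul_one_sub_pow_le hc hu.1 hu.2 k
    rw [sub_sub_cancel, Real.sqrt_mul hc] at h
    calc G (1 - r) * r ^ k ≤ B * exp (-(c / (1 - r))) * r ^ k := by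
          gcongr
          · exact pow_nonneg hr.1.le k
          · exact hGB _ hu
      _ ≤ B * exp (-(2 * √c) * √k) := by rw [mul_assoc, neg_mul, mul_assoc]; gcongr
  calc weightedMoment G k ≤ ∫ _ in Ioo (0 : ℝ) 1, B * exp (-(2 * √c) * √k) :=
        setIntegral_mono_on (integrableOn_weightedMoment hGcont k)
          (integrableOn_const measure_Ioo_lt_top.ne) measurableSet_Ioo hpt
    _ = B * exp (-(2 * √c) * √k) := by simp

lemma mul_mul_pow_le_weightedMoment (hGcont : ContinuousOn G (Icc 0 1))
    (hGmono : MonotoneOn G (Icc 0 1)) (hGpos : ∀ x ∈ Ioc (0 : ℝ) 1, 0 < G x) {y : ℝ}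
    (hy : y ∈ Ioc 0 (1 / 2)) (k : ℕ) :
    y * (G y * (1 - 2 * y) ^ k) ≤ weightedMoment G k := by
  have hsub : Ioc (1 - 2 * y) (1 - y) ⊆ Ioo 0 1 :=
    fun r hr => ⟨by linarith [hr.1, hy.2], by linarith [hr.2, hy.1]⟩
  have hInt := integrableOn_weightedMoment hGcont k
  calc y * (G y * (1 - 2 * y) ^ k) = ∫ _ in Ioc (1 - 2 * y) (1 - y), G y * (1 - 2 * y) ^ k := by
        rw [setIntegral_const, Real.volume_real_Ioc_of_le (by linarith [hy.1]), smul_eq_mul]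
        ring
    _ ≤ ∫ r in Ioc (1 - 2 * y) (1 - y), G (1 - r) * r ^ k := by
        refine setIntegral_mono_on (integrableOn_const measure_Ioc_lt_top.ne)
          (hInt.mono_set hsub) measurableSet_Ioc fun r hr => mul_le_mul ?_ ?_
            (pow_nonneg (by linarith [hy.2]) k) (hGpos _ (one_sub_mem_Ioc (hsub hr))).le
        · exact hGmono ⟨hy.1.le, by linarith [hy.2]⟩
            (Ioc_subset_Icc_self (one_sub_mem_Ioc (hsub hr))) (by linarith [hr.2])
        · exact pow_le_pow_left₀ (by linarith [hy.2]) hr.1.le k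
    _ ≤ weightedMoment G k :=
        setIntegral_mono_set hInt (ae_restrict_of_forall_mem measurableSet_Ioo
          fun r hr => weightedMoment_integrand_nonneg hGpos hr k) hsub.eventuallyLE

lemma weightedMoment_pos (hGcont : ContinuousOn G (Icc 0 1)) (hGmono : MonotoneOn G (Icc 0 1))
    (hGpos : ∀ x ∈ Ioc (0 : ℝ) 1, 0 < G x) (k : ℕ) : 0 < weightedMoment G k := by
  refine lt_of_lt_of_le ?_ (mul_mul_pow_le_weightedMoment hGcont hGmono hGpos
    (y := 1 / 4) ⟨by norm_num, by norm_num⟩ k)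
  have := hGpos (1 / 4) ⟨by norm_num, by norm_num⟩
  positivity

lemma log_one_div_weightedMoment_le (hGcont : ContinuousOn G (Icc 0 1))
    (hGmono : MonotoneOn G (Icc 0 1)) (hGpos : ∀ x ∈ Ioc (0 : ℝ) 1, 0 < G x) {y : ℝ}
    (hy : y ∈ Ioc 0 (1 / 4)) (k : ℕ) :
    log (1 / weightedMoment G k) ≤ log (1 / y) + log (1 / G y) + 4 * k * y := by
  have hGy : 0 < G y := hGpos y ⟨hy.1, by linarith [hy.2]⟩
  have h2y : 0 < 1 - 2 * y := by linarith [hy.2]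
  have hlow := mul_mul_pow_le_weightedMoment hGcont hGmono hGpos ⟨hy.1, by linarith [hy.2]⟩ k
  have hlog2y : -log (1 - 2 * y) ≤ 4 * y := by
    have hinv : (1 - 2 * y)⁻¹ ≤ 1 + 4 * y := by
      rw [inv_le_iff_one_le_mul₀ h2y]
      nlinarith [hy.1, hy.2]
    linarith [one_sub_inv_le_log_of_pos h2y]
  have hpos : 0 < y * (G y * (1 - 2 * y) ^ k) := mul_pos hy.1 (mul_pos hGy (pow_pos h2y k))
  calc log (1 / weightedMoment G k) ≤ log (1 / (y * (G y * (1 - 2 * y) ^ k))) :=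
        log_le_log (one_div_pos.2 (hpos.trans_le hlow)) (one_div_le_one_div_of_le hpos hlow)
    _ = log (1 / y) + log (1 / G y) + k * -log (1 - 2 * y) := by
        simp only [one_div, log_inv, log_mul hy.1.ne' (mul_pos hGy (pow_pos h2y k)).ne',
          log_mul hGy.ne' (pow_pos h2y k).ne', log_pow]
        ring
    _ ≤ log (1 / y) + log (1 / G y) + 4 * k * y := by
        nlinarith [mul_le_mul_of_nonneg_left hlog2y k.cast_nonneg]

lemma eventually_log_one_div_weightedMoment_le (hGcont : ContinuousOn G (Icc 0 1))
    (hGmono : MonotoneOn G (Icc 0 1)) (hGpos : ∀ x ∈ Ioc (0 : ℝ) 1, 0 < G x) {δ : ℝ}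
    (hδ : 0 < δ) (hδ4 : δ ≤ 1 / 4) :
    ∀ᶠ n : ℕ in atTop, log (1 / (2 * weightedMoment G (2 * n + 1))) ≤
      15 * √n + 12 * (n * (volume.restrict (Ioc 0 δ)).real {x | √n < log (1 / G x)}) := by
  have hanti : AntitoneOn (fun x => log (1 / G x)) (Ioc 0 δ) := by
    intro x hx y hy hxy
    have hGx := hGpos x ⟨hx.1, by linarith [hx.2]⟩
    simp only [one_div, log_inv, neg_le_neg_iff]
    exact log_le_log hGx
      (hGmono ⟨hx.1.le, by linarith [hx.2]⟩ ⟨hy.1.le, by linarith [hy.2]⟩ hxy)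
  filter_upwards [eventually_ge_atTop 1,
    tendsto_one_div_atTop_nhds_zero_nat.eventually_le_const hδ,
    tendsto_sqrt_natCast_atTop.eventually_ge_atTop (log (1 / G δ))] with n hn1 hnδ hδn
  obtain ⟨y, hy, hny, hya, hyn⟩ :=
    exists_mem_Ioc_le_of_antitoneOn hanti (by positivity) hnδ hδn
  set a := (volume.restrict (Ioc 0 δ)).real {x | √n < log (1 / G x)}
  have hn : (1 : ℝ) ≤ n := by exact_mod_cast hn1
  have hsqrt : 1 ≤ √(n : ℝ) := Real.one_le_sqrt.2 hn
  have hlogy : log (1 / y) ≤ 2 * √n := by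
    have hlogn : log n ≤ 2 * √n := by
      have := log_le_sub_one_of_pos (show 0 < √(n : ℝ) by positivity)
      rw [log_sqrt (by positivity)] at this
      linarith
    have := log_le_log (by positivity) hny
    rw [one_div, log_inv] at this
    rw [one_div, log_inv]
    linarith
  have hma : (2 * n + 1 : ℝ) * y ≤ 3 * (n * a) + 3 := by
    have ha : 0 ≤ a := measureReal_nonneg
    have : (2 * n + 1 : ℝ) * (1 / n) ≤ 3 := by
      rw [mul_one_div, div_le_iff₀ (by positivity)]; linarith
    nlinarith [mul_le_mul_of_nonneg_left hya (show (0 : ℝ) ≤ 2 * n + 1 by positivity),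
      mul_nonneg ha (sub_nonneg.2 hn)]
  have hm := weightedMoment_pos hGcont hGmono hGpos (2 * n + 1)
  calc log (1 / (2 * weightedMoment G (2 * n + 1))) ≤ log (1 / weightedMoment G (2 * n + 1)) :=
        log_le_log (by positivity) (one_div_le_one_div_of_le hm (by linarith))
    _ ≤ log (1 / y) + log (1 / G y) + 4 * ((2 * n + 1 : ℕ) : ℝ) * y :=
        log_one_div_weightedMoment_le hGcont hGmono hGpos ⟨hy.1, hy.2.trans hδ4⟩ _
    _ ≤ 15 * √n + 12 * (n * a) := by push_cast; linarith

lemma summable_log_one_div_weightedMoment (hGcont : ContinuousOn G (Icc 0 1))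
    (hGmono : MonotoneOn G (Icc 0 1)) (hGpos : ∀ x ∈ Ioc (0 : ℝ) 1, 0 < G x)
    (hLogLogInt : ∃ d > (0 : ℝ),
      ∫⁻ x in Ioc (0 : ℝ) d, ENNReal.ofReal (log (log (1 / G x))) < ⊤)
    (hM : Tendsto (fun n : ℕ => 2 * weightedMoment G (2 * n + 1)) atTop (𝓝 0)) :
    Summable fun n : ℕ => log (1 / (2 * weightedMoment G (2 * n + 1))) / (1 + (n : ℝ) ^ 2) := by
  obtain ⟨d, hd, hI⟩ := hLogLogInt
  set δ := min d (1 / 4)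
  have hδ : 0 < δ := lt_min hd (by norm_num)
  have hcont : ContinuousOn (fun x => log (1 / G x)) (Ioc 0 δ) := by
    have hG : ContinuousOn G (Ioc 0 δ) :=
      hGcont.mono fun x hx => ⟨hx.1.le, hx.2.trans ((min_le_right _ _).trans (by norm_num))⟩
    have hGpos' : ∀ x ∈ Ioc 0 δ, 0 < G x :=
      fun x hx => hGpos x ⟨hx.1, hx.2.trans ((min_le_right _ _).trans (by norm_num))⟩
    exact (continuousOn_const.div hG fun x hx => (hGpos' x hx).ne').log
      fun x hx => (one_div_pos.2 (hGpos' x hx)).ne'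
  refine summable_log_one_div_div_one_add_sq
    (fun n => mul_pos two_pos (weightedMoment_pos hGcont hGmono hGpos _)) hM
    (fun n => measureReal_nonneg) (summable_measureReal_sqrt_lt_div
      (hcont.aemeasurable measurableSet_Ioc) ?_)
    (eventually_log_one_div_weightedMoment_le hGcont hGmono hGpos hδ (min_le_right _ _))
  exact ne_top_of_le_ne_top hI.ne (lintegral_mono_set (Ioc_subset_Ioc_right (min_le_left _ _)))

end weightedMoment

theorem moments_of_G_admissible_general
    (G : ℝ → ℝ)
    (hGcont : ContinuousOn G (Set.Icc 0 1))
    (hGmono : MonotoneOn G (Set.Icc 0 1))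
    (hGpos : ∀ x ∈ Set.Ioc (0:ℝ) 1, 0 < G x)
    (hExpDec : 0 < Filter.liminf (fun x : ℝ => x * Real.log (1 / G x)) (𝓝[>] (0:ℝ)))
    (hLogLogInt : ∃ d > (0:ℝ),
      ∫⁻ x in Set.Ioc (0:ℝ) d, ENNReal.ofReal (Real.log (Real.log (1 / G x))) < ⊤) :
    AdmissibleSeq (fun n : ℕ => 2 * ∫ r in Set.Ioo (0:ℝ) 1, G (1 - r) * r ^ (2 * n + 1)) := by
  show AdmissibleSeq fun n => 2 * weightedMoment G (2 * n + 1)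
  obtain ⟨B, c, hB, hc, hGB⟩ := exists_le_mul_exp_neg_div hGmono hGpos hExpDec
  have hpos n : 0 < 2 * weightedMoment G (2 * n + 1) :=
    mul_pos two_pos (weightedMoment_pos hGcont hGmono hGpos _)
  have hdecay n : 2 * weightedMoment G (2 * n + 1) ≤ 2 * B * exp (-(2 * √c) * √n) := by
    have hsqrt : √(n : ℝ) ≤ √((2 * n + 1 : ℕ) : ℝ) :=
      Real.sqrt_le_sqrt (by push_cast; linarith)
    have hexp : exp (-(2 * √c) * √((2 * n + 1 : ℕ) : ℝ)) ≤ exp (-(2 * √c) * √n) :=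
      exp_le_exp.2 (by nlinarith [Real.sqrt_nonneg c])
    linarith [weightedMoment_le hGcont hB hc.le hGB (2 * n + 1), mul_le_mul_of_nonneg_left hexp hB]
  have hM : Tendsto (fun n : ℕ => 2 * weightedMoment G (2 * n + 1)) atTop (𝓝 0) :=
    squeeze_zero (fun n => (hpos n).le) hdecay
      (by simpa using (tendsto_exp_neg_mul_sqrt_natCast (by positivity)).const_mul (2 * B))
  refine ⟨hpos, fun m n hmn => ?_, hM, ⟨0, fun n _ => ?_⟩,
    exists_eventually_le_exp_neg_mul_sqrt (by positivity) hdecay,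
    summable_log_one_div_weightedMoment hGcont hGmono hGpos hLogLogInt hM⟩
  · exact mul_le_mul_of_nonneg_left (weightedMoment_antitone hGcont hGpos (by omega)) zero_le_two
  · have h := sq_weightedMoment_add_le hGcont hGpos (2 * n + 1) 2
    rw [show 2 * n + 1 + 2 = 2 * (n + 1) + 1 by ring,
      show 2 * n + 1 + 2 * 2 = 2 * (n + 2) + 1 by ring] at h
    exact two_mul_log_le_log_add_log (hpos (n + 2)) (hpos (n + 1)) (hpos n) (by nlinarith)

/-- **Moments of G are admissible.** If G satisfies (ExpDec) and (LogLogInt), then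
Mₙ = 2∫₀¹ G(1-r) r^{2n+1} dr is an admissible sequence. -/
theorem moments_of_G_admissible
    (G : ℝ → ℝ)
    (hGcont : ContinuousOn G (Set.Icc 0 1))
    (hGmono : MonotoneOn G (Set.Icc 0 1))
    (hGpos : ∀ x ∈ Set.Ioc (0:ℝ) 1, 0 < G x) (hG0 : G 0 = 0)
    (hExpDec : 0 < Filter.liminf (fun x : ℝ => x * Real.log (1 / G x)) (𝓝[>] (0:ℝ)))
    (hLogLogInt : ∃ d > (0:ℝ),
      ∫⁻ x in Set.Ioc (0:ℝ) d, ENNReal.ofReal (Real.log (Real.log (1 / G x))) < ⊤) :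
    AdmissibleSeq (fun n : ℕ => 2 * ∫ r in Set.Ioo (0:ℝ) 1, G (1 - r) * r ^ (2 * n + 1)) :=
  moments_of_G_admissible_general G hGcont hGmono hGpos hExpDec hLogLogInt
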